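/- For every m ≥ 3, the strong product P_m ⊠ K_2 is a planar closed locally Dirac graph. -/

import Mathlib

/-!
Both properties are read off the projection of `P_m ⊠ K₂` onto the path: it is injective on
each of the two rows, and adjacent vertices lie in columns at distance at most one.

Planarity. The columns met by a connected branch set form an interval. Among the branch sets of
an `H`-minor pick one, `B w₀`, whose lowest column `c` is largest. Every branch set of a closed
neighbour of `w₀` then meets the window of columns `c - 1, c`, which holds four vertices. If the
branch set of some further `x` meets the window too, then `|N[w₀] ∪ {x}| ≤ 4`. Otherwise `B x`,
being connected with a vertex in column `≤ c`, lies left of column `c - 1`, and the branch sets of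
the common neighbours of `w₀` and `x` all meet column `c - 1`, so `|N(w₀) ∩ N(x)| ≤ 2`. In `K₅`
and in `K₃,₃` every `w₀` has an `x` violating both bounds.

Local Dirac property. The closed neighbourhood of `(a, i)` is `N[a] × {0, 1}`, so the condition
becomes `|N[a]| ≤ 2 |N[a] ∩ N[b]| - 1` for `b ∈ N[a]`, which holds as soon as `|N[a]| ≤ 3`.
-/

/-- The strong product `G ⊠ H`. -/
def strongProd {α β : Type*} (G : SimpleGraph α) (H : SimpleGraph β) :
    SimpleGraph (α × β) where
  Adj a b :=
    (a.1 = b.1 ∧ H.Adj a.2 b.2) ∨ (a.2 = b.2 ∧ G.Adj a.1 b.1) ∨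
      (G.Adj a.1 b.1 ∧ H.Adj a.2 b.2)
  symm := ⟨by
    rintro a b (⟨h1, h2⟩ | ⟨h1, h2⟩ | ⟨h1, h2⟩)
    · exact Or.inl ⟨h1.symm, h2.symm⟩
    · exact Or.inr (Or.inl ⟨h1.symm, h2.symm⟩)
    · exact Or.inr (Or.inr ⟨h1.symm, h2.symm⟩)⟩
  loopless := ⟨by
    rintro a (⟨-, h⟩ | ⟨-, h⟩ | ⟨h, -⟩) <;> exact h.ne rfl⟩

/-- `H` is a minor of `G`, witnessed by disjoint nonempty connected branch sets. -/
def HasMinor {V : Type*} {W : Type*} (G : SimpleGraph V) (H : SimpleGraph W) : Prop :=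
  ∃ B : W → Set V,
    (∀ w, (B w).Nonempty) ∧
    (∀ w, (G.induce (B w)).Connected) ∧
    (∀ w₁ w₂, w₁ ≠ w₂ → Disjoint (B w₁) (B w₂)) ∧
    (∀ w₁ w₂, H.Adj w₁ w₂ → ∃ a ∈ B w₁, ∃ b ∈ B w₂, G.Adj a b)

/-- Planarity, via the Kuratowski–Wagner characterization: a graph is planar iff it has
neither a `K₅` nor a `K₃,₃` minor. -/
def Planar {V : Type*} (G : SimpleGraph V) : Prop :=
  ¬ HasMinor G (SimpleGraph.completeGraph (Fin 5)) ∧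
  ¬ HasMinor G (completeBipartiteGraph (Fin 3) (Fin 3))

/-- `G` is closed locally Dirac: for every vertex `v`, the subgraph induced by the closed
neighbourhood `N[v]` satisfies Dirac's condition (every vertex of `⟨N[v]⟩` has degree at
least `|N[v]|/2` there). -/
def ClosedLocallyDirac {V : Type*} (G : SimpleGraph V) : Prop :=
  ∀ v u : V, u ∈ insert v (G.neighborSet v) →
    (insert v (G.neighborSet v)).ncard ≤
      2 * (G.neighborSet u ∩ insert v (G.neighborSet v)).ncard

open SimpleGraph Function

instance {V W : Type*} : DecidableRel (completeBipartiteGraph V W).Adj := fun v w =>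
  inferInstanceAs (Decidable (v.isLeft ∧ w.isRight ∨ v.isRight ∧ w.isLeft))

theorem Finset.card_le_card_of_pairwise_disjoint_of_injOn {ι V α : Type*} [Fintype α]
    {B : ι → Set V} (hB : Pairwise (Disjoint on B)) {T : Set V} {h : V → α} (hh : Set.InjOn h T)
    (s : Finset ι) (hs : ∀ i ∈ s, ∃ v ∈ B i, v ∈ T) : s.card ≤ Fintype.card α := by
  choose p hpB hpT using hs
  have hinj : Injective fun i : s => h (p i i.2) := by
    rintro ⟨i, hi⟩ ⟨j, hj⟩ hij
    by_contra hne
    exact (hB fun e => hne (Subtype.ext e)).ne_of_mem (hpB i hi) (hpB j hj)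
      (hh (hpT i hi) (hpT j hj) hij)
  simpa using Fintype.card_le_of_injective _ hinj

section Layering

variable {V : Type*} {G : SimpleGraph V} {f : V → ℕ}

theorem SimpleGraph.Walk.exists_mem_support_eq (hf : ∀ ⦃a b⦄, G.Adj a b → f b ≤ f a + 1)
    {x y : V} (p : G.Walk x y) {k : ℕ} (hx : f x ≤ k) (hy : k ≤ f y) :
    ∃ v ∈ p.support, f v = k := by
  induction p with
  | nil => exact ⟨_, Walk.start_mem_support _, le_antisymm hx hy⟩
  | cons h q ih =>
    rcases hx.eq_or_lt with hx | hx
    · exact ⟨_, Walk.start_mem_support _, hx⟩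
    · obtain ⟨v, hv, hvk⟩ := ih (by have := hf h; omega) hy
      exact ⟨v, List.mem_cons_of_mem _ hv, hvk⟩

theorem ncard_neighborSet_le_two_of_injective (hf : ∀ ⦃a b⦄, G.Adj a b → f b ≤ f a + 1)
    (hinj : Injective f) (a : V) :
    (G.neighborSet a).ncard ≤ 2 :=
  calc (G.neighborSet a).ncard ≤ ({f a - 1, f a + 1} : Set ℕ).ncard := by
        refine Set.ncard_le_ncard_of_injOn f (fun b hb => ?_) hinj.injOn
        have := hf hb
        have := hf hb.symm
        have := hinj.ne hb.ne
        simp only [Set.mem_insert_iff, Set.mem_singleton_iff]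
        omega
    _ ≤ 2 := (Set.ncard_insert_le _ _).trans (by simp)

variable {B : Set V} (hf : ∀ ⦃a b⦄, G.Adj a b → f b ≤ f a + 1)
  (hB : (G.induce B).Connected)
include hf hB

theorem exists_mem_eq_of_induce_connected {x y : V} (hx : x ∈ B) (hy : y ∈ B) {k : ℕ}
    (hxk : f x ≤ k) (hky : k ≤ f y) : ∃ v ∈ B, f v = k := by
  obtain ⟨p⟩ := hB.preconnected ⟨x, hx⟩ ⟨y, hy⟩
  obtain ⟨v, -, hv⟩ := p.exists_mem_support_eq (f := f ∘ Subtype.val) (fun _ _ h => hf h) hxk hky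
  exact ⟨v, v.2, hv⟩

theorem exists_mem_window_of_induce_connected {x y : V} (hx : x ∈ B) (hy : y ∈ B) {c : ℕ}
    (hxc : f x ≤ c) (hcy : c ≤ f y + 1) : ∃ v ∈ B, f v ≤ c ∧ c ≤ f v + 1 := by
  by_cases hyc : f y ≤ c
  · exact ⟨y, hy, hyc, hcy⟩
  · obtain ⟨v, hv, rfl⟩ := exists_mem_eq_of_induce_connected hf hB hx hy hxc (by omega)
    exact ⟨v, hv, le_rfl, by omega⟩

theorem forall_lt_of_induce_connected_of_forall_notMem_window {x : V} (hx : x ∈ B) {c : ℕ}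
    (hxc : f x ≤ c) (hmiss : ∀ v ∈ B, f v ≤ c → f v + 1 < c) : ∀ v ∈ B, f v + 1 < c := by
  intro v hv
  by_contra hvc
  have hx' := hmiss x hx hxc
  obtain ⟨u, hu, huc⟩ := exists_mem_eq_of_induce_connected hf hB hx hv (k := c - 1)
    (by omega) (by omega)
  have := hmiss u hu (by omega)
  omega

end Layering

section Minor

variable {V W : Type*} {G : SimpleGraph V} {f : V → ℕ} {g : V → Fin 2}

theorem injOn_window (hfg : Injective fun v => (f v, g v)) (c : ℕ) :
    Set.InjOn (fun v => (decide (f v = c), g v)) {v | f v ≤ c ∧ c ≤ f v + 1} := by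
  intro v ⟨hv₁, hv₂⟩ w ⟨hw₁, hw₂⟩ h
  simp only [Prod.mk.injEq, decide_eq_decide] at h
  have hvw : f v = f w := by omega
  exact hfg (by simp only [hvw, h.2])

theorem injOn_column (hfg : Injective fun v => (f v, g v)) (k : ℕ) :
    Set.InjOn g {v | f v = k} :=
  fun _ hv _ hw h => hfg (Prod.ext (hv.trans hw.symm) h)

theorem exists_max_min_image {ι : Type*} [Finite ι] [Nonempty ι] {B : ι → Set V}
    (hne : ∀ i, (B i).Nonempty) (f : V → ℕ) :
    ∃ i₀ c, (∃ v ∈ B i₀, f v = c) ∧ (∀ v ∈ B i₀, c ≤ f v) ∧ ∀ i, ∃ v ∈ B i, f v ≤ c := by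
  obtain ⟨i₀, hi₀⟩ := Finite.exists_max fun i => sInf (f '' B i)
  refine ⟨i₀, _, Nat.sInf_mem ((hne i₀).image f), fun v hv => Nat.sInf_le ⟨v, hv, rfl⟩,
    fun i => ?_⟩
  obtain ⟨v, hv, hvc⟩ := Nat.sInf_mem ((hne i).image f)
  exact ⟨v, hv, hvc ▸ hi₀ i⟩

theorem not_hasMinor_of_injective_layering [Fintype W] [DecidableEq W] [Nonempty W]
    {H : SimpleGraph W} [DecidableRel H.Adj] (hf : ∀ ⦃a b⦄, G.Adj a b → f b ≤ f a + 1)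
    (hfg : Injective fun v => (f v, g v))
    (hH : ∀ w, ∃ x, 4 < (insert x (insert w (H.neighborFinset w))).card ∧
      2 < (H.neighborFinset w ∩ H.neighborFinset x).card) :
    ¬ HasMinor G H := by
  rintro ⟨B, hne, hconn, hdisj, hadj⟩
  obtain ⟨w₀, c, ⟨v₀, hv₀, hv₀c⟩, hw₀c, below⟩ := exists_max_min_image hne f
  have hwin : ∀ w ∈ insert w₀ (H.neighborFinset w₀), ∃ v ∈ B w, f v ≤ c ∧ c ≤ f v + 1 := by
    intro w hw
    rcases Finset.mem_insert.1 hw with rfl | hw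
    · exact ⟨v₀, hv₀, hv₀c.le, by omega⟩
    · obtain ⟨a, ha, b, hb, hab⟩ := hadj w₀ w ((H.mem_neighborFinset _ _).1 hw)
      obtain ⟨p, hp, hpc⟩ := below w
      have := hw₀c a ha
      have := hf hab.symm
      exact exists_mem_window_of_induce_connected hf (hconn w) hp hb hpc (by omega)
  obtain ⟨x, hx₅, hx₃⟩ := hH w₀
  by_cases hxwin : ∃ v ∈ B x, f v ≤ c ∧ c ≤ f v + 1
  · have := Finset.card_le_card_of_pairwise_disjoint_of_injOn hdisj (injOn_window hfg c) _
      (Finset.forall_mem_insert _ _ _ |>.2 ⟨hxwin, hwin⟩)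
    simp only [Fintype.card_prod, Fintype.card_bool, Fintype.card_fin] at this
    omega
  · push Not at hxwin
    obtain ⟨p, hp, hpc⟩ := below x
    have hxlow := forall_lt_of_induce_connected_of_forall_notMem_window hf (hconn x) hp hpc hxwin
    have hcol : ∀ y ∈ H.neighborFinset w₀ ∩ H.neighborFinset x,
        ∃ v ∈ B y, v ∈ {v | f v = c - 1} := by
      intro y hy
      rw [Finset.mem_inter] at hy
      obtain ⟨a, ha, b, hb, hab⟩ := hadj x y ((H.mem_neighborFinset _ _).1 hy.2)
      obtain ⟨u, hu, -, huc⟩ := hwin y (Finset.mem_insert_of_mem hy.1)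
      have := hxlow a ha
      have := hf hab
      exact exists_mem_eq_of_induce_connected hf (hconn y) hb hu (by omega) (by omega)
    have := Finset.card_le_card_of_pairwise_disjoint_of_injOn hdisj (injOn_column hfg _) _ hcol
    simp only [Fintype.card_fin] at this
    omega

end Minor

theorem completeGraph_fin_five_exists_card_gt : ∀ w : Fin 5, ∃ x,
    4 < (insert x (insert w ((completeGraph (Fin 5)).neighborFinset w))).card ∧
    2 < ((completeGraph (Fin 5)).neighborFinset w ∩
      (completeGraph (Fin 5)).neighborFinset x).card := by
  decide

theorem completeBipartiteGraph_fin_three_exists_card_gt : ∀ w : Fin 3 ⊕ Fin 3, ∃ x,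
    4 < (insert x (insert w ((completeBipartiteGraph (Fin 3) (Fin 3)).neighborFinset w))).card ∧
    2 < ((completeBipartiteGraph (Fin 3) (Fin 3)).neighborFinset w ∩
      (completeBipartiteGraph (Fin 3) (Fin 3)).neighborFinset x).card := by
  decide

section StrongProduct

variable {α β : Type*}

theorem strongProd_adj_le {G : SimpleGraph α} {H : SimpleGraph β} {f : α → ℕ}
    (hf : ∀ ⦃a b⦄, G.Adj a b → f b ≤ f a + 1) ⦃p q : α × β⦄ (h : (strongProd G H).Adj p q) :
    f q.1 ≤ f p.1 + 1 := by
  rcases h with ⟨h, -⟩ | ⟨-, h⟩ | ⟨h, -⟩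
  · rw [h]
    omega
  · exact hf h
  · exact hf h

theorem planar_strongProd_top_fin_two {G : SimpleGraph α} {f : α → ℕ}
    (hf : ∀ ⦃a b⦄, G.Adj a b → f b ≤ f a + 1) (hinj : Injective f) :
    Planar (strongProd G (⊤ : SimpleGraph (Fin 2))) := by
  have hfg : Injective fun p : α × Fin 2 => (f p.1, p.2) := fun p q h => by
    simp only [Prod.mk.injEq] at h
    exact Prod.ext (hinj h.1) h.2
  exact ⟨not_hasMinor_of_injective_layering (strongProd_adj_le hf) hfg completeGraph_fin_five_exists_card_gt,
    not_hasMinor_of_injective_layering (strongProd_adj_le hf) hfg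
      completeBipartiteGraph_fin_three_exists_card_gt⟩

theorem insert_neighborSet_strongProd (G : SimpleGraph α) (H : SimpleGraph β) (p : α × β) :
    insert p ((strongProd G H).neighborSet p) =
      insert p.1 (G.neighborSet p.1) ×ˢ insert p.2 (H.neighborSet p.2) := by
  ext ⟨a, b⟩
  simp only [Set.mem_insert_iff, mem_neighborSet, Set.mem_prod, Prod.ext_iff, strongProd]
  tauto

theorem neighborSet_inter_eq_diff (G : SimpleGraph α) (a : α) (s : Set α) :
    G.neighborSet a ∩ s = (insert a (G.neighborSet a) ∩ s) \ {a} := by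
  ext b
  simp only [Set.mem_inter_iff, Set.mem_sdiff, Set.mem_insert_iff, Set.mem_singleton_iff,
    mem_neighborSet]
  constructor
  · rintro ⟨hab, hb⟩
    exact ⟨⟨Or.inr hab, hb⟩, hab.ne'⟩
  · rintro ⟨⟨rfl | hab, hb⟩, hne⟩
    · exact absurd rfl hne
    · exact ⟨hab, hb⟩

theorem closedLocallyDirac_strongProd_top_fin_two [Finite α] {G : SimpleGraph α}
    (hG : ∀ a, (G.neighborSet a).ncard ≤ 2) :
    ClosedLocallyDirac (strongProd G (⊤ : SimpleGraph (Fin 2))) := by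
  intro v u hu
  set N : α → Set α := fun a => insert a (G.neighborSet a)
  have hN (p : α × Fin 2) : insert p ((strongProd G ⊤).neighborSet p) = N p.1 ×ˢ Set.univ := by
    rw [insert_neighborSet_strongProd]
    congr
    ext i
    simp [eq_or_ne]
  have hu₁ : u.1 ∈ N v.1 := by
    rw [hN] at hu
    exact hu.1
  rw [neighborSet_inter_eq_diff, hN, hN, Set.prod_inter_prod, Set.univ_inter,
    Set.ncard_sdiff_singleton_of_mem (s := (N u.1 ∩ N v.1) ×ˢ Set.univ)
      ⟨⟨Set.mem_insert _ _, hu₁⟩, Set.mem_univ _⟩, Set.ncard_prod,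
    Set.ncard_prod, Set.ncard_univ, Nat.card_fin]
  have hv : (N v.1).ncard ≤ 3 := (Set.ncard_insert_le _ _).trans (by have := hG v.1; omega)
  rcases eq_or_ne u.1 v.1 with huv | huv
  · have : 1 ≤ (N v.1).ncard := Set.one_le_ncard_insert _ _
    rw [huv, Set.inter_self]
    omega
  · have : 2 ≤ (N u.1 ∩ N v.1).ncard :=
      (Set.one_lt_ncard_iff).2 ⟨u.1, v.1, ⟨Set.mem_insert _ _, hu₁⟩,
        ⟨Set.mem_insert_of_mem _ (hu₁.resolve_left huv).symm, Set.mem_insert _ _⟩, huv⟩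
    omega

end StrongProduct

theorem stmt19_general (m : ℕ) :
    Planar (strongProd (SimpleGraph.pathGraph m) (⊤ : SimpleGraph (Fin 2))) ∧
    ClosedLocallyDirac (strongProd (SimpleGraph.pathGraph m) (⊤ : SimpleGraph (Fin 2))) := by
  have hpath : ∀ ⦃i j : Fin m⦄, (pathGraph m).Adj i j → j.val ≤ i.val + 1 := fun i j h => by
    rw [pathGraph_adj] at h
    omega
  exact ⟨planar_strongProd_top_fin_two hpath Fin.val_injective,
    closedLocallyDirac_strongProd_top_fin_two
      (ncard_neighborSet_le_two_of_injective hpath Fin.val_injective)⟩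

/-- For every `m ≥ 3`, the strong product `P_m ⊠ K₂` is a planar closed locally Dirac graph. -/
theorem stmt19 (m : ℕ) (hm : 3 ≤ m) :
    Planar (strongProd (SimpleGraph.pathGraph m) (⊤ : SimpleGraph (Fin 2))) ∧
    ClosedLocallyDirac (strongProd (SimpleGraph.pathGraph m) (⊤ : SimpleGraph (Fin 2))) :=
  stmt19_general m
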